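/- If A is an extended finite automaton over some group with L(A) = { aⁿbⁿ : n ≥ 1 }, then gmc_A(n) ∈ Ω(n): there is a constant d > 0 such that gmc_A(n) ≥ d·n for infinitely many n. -/

import Mathlib

open scoped Classical

/-- An extended finite automaton (EFA) over a group `M`, with input alphabet `V`:
a finite automaton whose transitions additionally multiply a group register by elements
of `M`. -/
structure EFA (V M : Type) [Group M] where
  /-- States. -/
  Q : Type
  [fQ : Fintype Q]
  /-- Transition function: finitely many (state, group element) pairs per state and letter. -/
  δ : Q → V → Set (Q × M)
  fin : ∀ q a, (δ q a).Finite
  /-- Initial state. -/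
  q₀ : Q
  /-- Final states. -/
  F : Set Q

variable {V M : Type} [Group M]

/-- `A.Steps c c' k` : the EFA `A` goes from configuration `c` (state, remaining input,
register) to configuration `c'` using exactly `k` transitions whose group element is not the
identity. -/
inductive EFA.Steps (A : EFA V M) :
    A.Q × List V × M → A.Q × List V × M → ℕ → Prop
  | refl (c : A.Q × List V × M) : Steps A c c 0
  | step {s : A.Q} {r : M} {q : A.Q} {w : List V} {m : M} {c : A.Q × List V × M} {k : ℕ}
      {a : V} (h : (s, r) ∈ A.δ q a) (ih : Steps A (s, w, m * r) c k) :
      Steps A (q, a :: w, m) c (if r = 1 then k else k + 1)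

/-- The word `w` is accepted using exactly `k` non-identity group elements: starting from the
initial state with register `1`, the whole input is read and a final state is reached with
register `1`. -/
def EFA.AcceptsN (A : EFA V M) (w : List V) (k : ℕ) : Prop :=
  ∃ q ∈ A.F, A.Steps (A.q₀, w, 1) (q, [], 1) k

/-- The language accepted by an EFA. -/
def EFA.language (A : EFA V M) : Language V := {w | ∃ k, A.AcceptsN w k}

/-- Group memory complexity of a word: the minimal number of non-identity group elements used
over all accepting computations (`0` if the word is not accepted). -/
noncomputable def EFA.gmcW (A : EFA V M) (w : List V) : ℕ :=
  sInf {k | A.AcceptsN w k}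

/-- Group memory complexity of the EFA: maximum over words of length `n`. -/
noncomputable def EFA.gmcFun (A : EFA V M) (n : ℕ) : ℕ :=
  sSup {m | ∃ w : List V, w.length = n ∧ A.gmcW w = m}

/-- `f ∈ O(h)` for `ℕ`-valued functions. -/
def InO (f h : ℕ → ℕ) : Prop := ∃ c : ℕ, ∀ n, f n ≤ c * h n + c

/-- `f ∈ Ω(n)`: there is a rational constant `1/c > 0` with `f n ≥ n/c` for infinitely many `n`. -/
def InOmegaLinear (f : ℕ → ℕ) : Prop := ∃ c : ℕ, 0 < c ∧ ∀ m : ℕ, ∃ n ≥ m, n ≤ c * f n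

/-!
Fix an accepting run on `aᴺbᴺ` that uses `K = gmc(aᴺbᴺ)` non-identity elements. If
`N ≥ |Q| (K + 1)`, two of the first `N + 1` positions in the `a`-block carry the same state and
the same number of non-identity elements read so far. The loop between them multiplies the
register by `1`, so cutting it out gives an accepting run on some `aⁿbᴺ` with `n < N`, which is not
in the language. Hence `N < |Q| (K + 1)`, and `gmc(2N) ≥ K` grows linearly.
-/

namespace EFA

attribute [instance] EFA.fQ

variable {A : EFA V M}

def Run (A : EFA V M) (c : A.Q × M) (u : List V) (c' : A.Q × M) (k : ℕ) : Prop :=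
  A.Steps (c.1, u, c.2) (c'.1, [], c'.2) k

theorem Steps.trans {c₁ c₂ c₃ : A.Q × List V × M} {k₁ k₂ : ℕ}
    (h₁ : A.Steps c₁ c₂ k₁) (h₂ : A.Steps c₂ c₃ k₂) : A.Steps c₁ c₃ (k₁ + k₂) := by
  induction h₁ with
  | refl => simpa using h₂
  | step hδ _ ih =>
    convert Steps.step hδ (ih h₂) using 1
    split_ifs <;> omega

theorem Steps.append_right {c c' : A.Q × List V × M} {k : ℕ} (h : A.Steps c c' k)
    (v : List V) : A.Steps (c.1, c.2.1 ++ v, c.2.2) (c'.1, c'.2.1 ++ v, c'.2.2) k := by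
  induction h with
  | refl => exact .refl _
  | step hδ _ ih => exact .step hδ ih

theorem Steps.register_eq_of_zero {c c' : A.Q × List V × M} {k : ℕ} (h : A.Steps c c' k)
    (hk : k = 0) : c'.2.2 = c.2.2 := by
  induction h with
  | refl => rfl
  | step _ _ ih =>
    split_ifs at hk with hr
    simpa [hr] using ih hk

theorem Run.refl (c : A.Q × M) : A.Run c [] c 0 :=
  Steps.refl _

theorem Run.nil {c c' : A.Q × M} {k : ℕ} (h : A.Run c [] c' k) : c' = c ∧ k = 0 := by
  obtain ⟨p, g⟩ := c
  obtain ⟨p', g'⟩ := c'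
  cases h
  exact ⟨rfl, rfl⟩

theorem Run.append {c c' c'' : A.Q × M} {u v : List V} {k₁ k₂ : ℕ} (h₁ : A.Run c u c' k₁)
    (h₂ : A.Run c' v c'' k₂) : A.Run c (u ++ v) c'' (k₁ + k₂) :=
  (h₁.append_right v).trans h₂

theorem Run.split {c c'' : A.Q × M} {u v : List V} {k : ℕ} (h : A.Run c (u ++ v) c'' k) :
    ∃ c' k₁ k₂, k = k₁ + k₂ ∧ A.Run c u c' k₁ ∧ A.Run c' v c'' k₂ := by
  induction u generalizing c k with
  | nil => exact ⟨c, 0, k, by simp, .refl c, h⟩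
  | cons a u ih =>
    obtain ⟨p, g⟩ := c
    rcases h with _ | ⟨hδ, tail⟩
    obtain ⟨c', k₁, k₂, rfl, h₁, h₂⟩ := ih (c := (_, _)) tail
    refine ⟨c', _, k₂, ?_, Steps.step hδ h₁, h₂⟩
    split_ifs <;> omega

theorem Run.exists_trace {x : V} {n K : ℕ} {c c' : A.Q × M}
    (h : A.Run c (List.replicate n x) c' K) :
    ∃ (t : ℕ → A.Q × M) (cnt : ℕ → ℕ), t 0 = c ∧ t n = c' ∧ cnt 0 = 0 ∧ cnt n = K ∧
      ∀ i j, i ≤ j → j ≤ n → ∃ d, cnt j = cnt i + d ∧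
        A.Run (t i) (List.replicate (j - i) x) (t j) d := by
  induction n generalizing c' K with
  | zero =>
    obtain ⟨rfl, rfl⟩ := h.nil
    refine ⟨fun _ => c', fun _ => 0, rfl, rfl, rfl, rfl, fun i j _ hj => ⟨0, rfl, ?_⟩⟩
    simpa [show j = 0 by omega] using Run.refl c'
  | succ n ih =>
    rw [List.replicate_succ'] at h
    obtain ⟨c₁, k₁, k₂, rfl, h₁, h₂⟩ := h.split
    obtain ⟨t, cnt, ht0, htn, hc0, hcn, hseg⟩ := ih h₁
    refine ⟨fun i => if i ≤ n then t i else c', fun i => if i ≤ n then cnt i else k₁ + k₂,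
      by simpa using ht0, by simp, by simpa using hc0, by simp, fun i j hij hj => ?_⟩
    rcases Nat.lt_or_ge n j with hjn | hjn
    · obtain rfl : j = n + 1 := by omega
      rcases Nat.lt_or_ge n i with hin | hin
      · obtain rfl : i = n + 1 := by omega
        exact ⟨0, by simp, by simpa using Run.refl c'⟩
      obtain ⟨d, hd, hr⟩ := hseg i n hin le_rfl
      refine ⟨d + k₂, by simp [hin]; omega, ?_⟩
      rw [htn] at hr
      simpa [hin, show n + 1 - i = n - i + 1 by omega, List.replicate_succ'] using hr.append h₂
    · simpa [hjn, hij.trans hjn] using hseg i j hij hjn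

theorem Run.exists_shorter_replicate {x : V} {n K : ℕ} {c c' : A.Q × M}
    (h : A.Run c (List.replicate n x) c' K) (hn : Fintype.card A.Q * (K + 1) ≤ n) :
    ∃ m < n, ∃ K', A.Run c (List.replicate m x) c' K' := by
  obtain ⟨t, cnt, ht0, htn, -, hcn, hseg⟩ := h.exists_trace
  have hcnt : ∀ i ≤ n, cnt i ≤ K := fun i hi => by
    obtain ⟨d, hd, -⟩ := hseg i n hi le_rfl
    omega
  obtain ⟨i, hi, j, hj, hij, hf⟩ :=
    Finset.exists_ne_map_eq_of_card_lt_of_maps_to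
      (s := Finset.range (n + 1)) (t := Finset.univ ×ˢ Finset.range (K + 1))
      (f := fun i => ((t i).1, cnt i)) (by simp; omega)
      (fun i hi => by simpa [Nat.lt_succ_iff] using hcnt i (by simpa [Nat.lt_succ_iff] using hi))
  rw [Finset.mem_range] at hi hj
  rw [Prod.mk.injEq] at hf
  obtain ⟨hstate, hcij⟩ := hf
  wlog hlt : i < j generalizing i j
  · exact this j hj i hi hij.symm hstate.symm hcij.symm (by omega)
  obtain ⟨d₁, -, h₁⟩ := hseg 0 i (by omega) (by omega)
  obtain ⟨d₂, hd₂, h₂⟩ := hseg i j hlt.le (by omega)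
  obtain ⟨d₃, -, h₃⟩ := hseg j n (by omega) le_rfl
  have htij : t j = t i := Prod.ext hstate.symm (h₂.register_eq_of_zero (by omega))
  refine ⟨i + (n - j), by omega, d₁ + d₃, ?_⟩
  rw [List.replicate_add]
  rw [ht0, Nat.sub_zero] at h₁
  rw [htij, htn] at h₃
  exact h₁.append h₃

theorem lt_card_mul_succ_of_acceptsN {x : V} {v : List V} {N K : ℕ}
    (h : A.AcceptsN (List.replicate N x ++ v) K)
    (hmin : ∀ n < N, List.replicate n x ++ v ∉ A.language) :
    N < Fintype.card A.Q * (K + 1) := by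
  by_contra! hN
  obtain ⟨qf, hqf, hrun⟩ := h
  obtain ⟨c, K₁, K₂, rfl, h₁, h₂⟩ := Run.split (c := (A.q₀, 1)) (c'' := (qf, 1)) hrun
  obtain ⟨n, hn, K₁', h₁'⟩ := h₁.exists_shorter_replicate
    ((Nat.mul_le_mul_left _ (by omega)).trans hN)
  exact hmin n hn ⟨K₁' + K₂, qf, hqf, h₁'.append h₂⟩

theorem acceptsN_gmcW {w : List V} (hw : w ∈ A.language) : A.AcceptsN w (A.gmcW w) :=
  Nat.sInf_mem hw

theorem gmcW_le_gmcFun [Finite V] (A : EFA V M) (w : List V) :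
    A.gmcW w ≤ A.gmcFun w.length :=
  le_csSup ((List.finite_length_eq V w.length).image A.gmcW).bddAbove ⟨w, rfl, rfl⟩

end EFA

theorem List.replicate_append_replicate_inj {α : Type*} {x y : α} (hxy : x ≠ y)
    {m n m' n' : ℕ} :
    replicate m x ++ replicate n y = replicate m' x ++ replicate n' y ↔ m = m' ∧ n = n' := by
  refine ⟨fun h => ⟨?_, ?_⟩, fun ⟨rfl, rfl⟩ => rfl⟩
  · simpa [count_replicate, hxy.symm] using congrArg (count x) h
  · simpa [count_replicate, hxy] using congrArg (count y) h

/-- If an EFA over some group accepts `{ aⁿbⁿ : n ≥ 1 }` (with `a = 0`, `b = 1` in `Fin 2`),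
then its group memory complexity is in `Ω(n)`. -/
theorem efa_anbn_gmc_omega_linear (M : Type) [Group M] (A : EFA (Fin 2) M)
    (hA : A.language =
      {w : List (Fin 2) | ∃ n : ℕ, 1 ≤ n ∧ w = List.replicate n 0 ++ List.replicate n 1}) :
    InOmegaLinear A.gmcFun := by
  set q := Fintype.card A.Q
  have hq : 0 < q := Fintype.card_pos_iff.2 ⟨A.q₀⟩
  refine ⟨4 * q, by omega, fun m => ?_⟩
  set N := max m q
  set w := List.replicate N (0 : Fin 2) ++ List.replicate N 1
  have hw : w ∈ A.language := by
    rw [hA]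
    exact ⟨N, by omega, rfl⟩
  have hshorter : ∀ n < N, List.replicate n 0 ++ List.replicate N 1 ∉ A.language := by
    rw [hA]
    rintro n hn ⟨p, -, hp⟩
    have := (List.replicate_append_replicate_inj (by decide)).1 hp
    omega
  have hK : N < q * (A.gmcW w + 1) :=
    EFA.lt_card_mul_succ_of_acceptsN (EFA.acceptsN_gmcW hw) hshorter
  have hF : A.gmcW w ≤ A.gmcFun (2 * N) := by
    simpa [w, two_mul] using A.gmcW_le_gmcFun w
  have hK₁ : 0 < A.gmcW w := Nat.pos_of_ne_zero fun h₀ => by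
    rw [h₀] at hK
    omega
  refine ⟨2 * N, by omega, ?_⟩
  calc 2 * N ≤ 2 * (q * (A.gmcW w + 1)) := by omega
    _ ≤ 4 * q * A.gmcW w := by nlinarith
    _ ≤ 4 * q * A.gmcFun (2 * N) := Nat.mul_le_mul_left _ hF
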